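/- Let w ∈ S_n avoid 3412 and 4231 and suppose (i,j) satisfies: w fixes {1,...,i-1} setwise, w(i) ≥ j, and w(j) = i. Then every transposition T ≤ w (in Bruhat order) that does not fix i is of the form T_{i,r} with i < r ≤ j. -/

import Mathlib

/-!
A Bruhat step `u < u * T_{a,b}` with `u a < u b` can only shrink every entry of the rank
matrix `#{k < p | u k < q}`, so `T ≤ w` forces the rank matrix of `T` to dominate that of `w`.
Since `w` maps `[0, i)` into itself and `w j = i`, the graph of `w` has `i + 1` points in
`[0, y) × [0, i + 1)` once `j < y`, and `x + 1` points in `[0, x + 1) × [0, i)` when `x < i`;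
a transposition `T_{x,y}` moving `i` has fewer in the box with `x = i`, resp. `y = i`.
-/

open Equiv

/-- Number of inversions (Coxeter length) of a permutation of ℕ. -/
noncomputable def invNum (w : Perm ℕ) : ℕ :=
  Set.ncard {p : ℕ × ℕ | p.1 < p.2 ∧ w p.2 < w p.1}

/-- Strong Bruhat order on (finitary) permutations of ℕ. -/
def BruhatLE (x y : Perm ℕ) : Prop :=
  Relation.ReflTransGen
    (fun u v => (∃ a b : ℕ, a < b ∧ v = u * Equiv.swap a b) ∧ invNum u < invNum v) x y

def BruhatLT (x y : Perm ℕ) : Prop := BruhatLE x y ∧ x ≠ y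

/-- w avoids the pattern 3412. -/
def Avoids3412 (w : Perm ℕ) : Prop :=
  ¬ ∃ a b c d : ℕ, a < b ∧ b < c ∧ c < d ∧ w c < w d ∧ w d < w a ∧ w a < w b

/-- w avoids the pattern 4231. -/
def Avoids4231 (w : Perm ℕ) : Prop :=
  ¬ ∃ a b c d : ℕ, a < b ∧ b < c ∧ c < d ∧ w d < w b ∧ w b < w c ∧ w c < w a

def inversionSet (u : Perm ℕ) : Set (ℕ × ℕ) := {p | p.1 < p.2 ∧ u p.2 < u p.1}

lemma inversionSet_finite_of_forall_le_eq {u : Perm ℕ} {N : ℕ} (hN : ∀ k, N ≤ k → u k = k) :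
    (inversionSet u).Finite := by
  refine ((Set.finite_Iio N).prod (Set.finite_Iio N)).subset ?_
  rintro ⟨p, q⟩ ⟨hpq, hinv : u q < u p⟩
  have hqN : q < N := by
    by_contra! hq
    rw [hN q hq] at hinv
    have hp : u p = p := u.injective (hN (u p) (by omega))
    omega
  exact ⟨hpq.trans hqN, hqN⟩

/-- Relabelling the positions of an inversion of `u` by `T_{a,b}` gives an inversion of
`u * T_{a,b}` unless `T_{a,b}` reverses the pair; such pairs are inversions of `u * T_{a,b}`
already, and they are never hit by the relabelling. -/
lemma invNum_le_invNum_mul_swap {u : Perm ℕ} {a b : ℕ} (hab : a < b) (hu : u a < u b)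
    (hfin : (inversionSet (u * swap a b)).Finite) : invNum u ≤ invNum (u * swap a b) := by
  set s := swap a b
  let f : ℕ × ℕ → ℕ × ℕ := fun z => if s z.1 < s z.2 then (s z.1, s z.2) else z
  refine Set.ncard_le_ncard_of_injOn f ?_ ?_ hfin
  · rintro ⟨p, q⟩ ⟨hpq, hinv : u q < u p⟩
    simp only [f, Set.mem_ofPred_eq, Perm.mul_apply]
    split_ifs with hs
    · simpa [s] using And.intro hs hinv
    · simp only [s, swap_apply_def] at hs ⊢
      split_ifs at hs ⊢ <;> subst_vars <;> omega
  · rintro ⟨p, q⟩ ⟨hpq, -⟩ ⟨p', q'⟩ ⟨hpq', -⟩ heq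
    simp only [f] at heq
    split_ifs at heq with hs hs' hs' <;> simp only [Prod.mk.injEq] at heq
    · rw [s.injective heq.1, s.injective heq.2]
    · rw [← heq.1, ← heq.2, swap_apply_self, swap_apply_self] at hs'
      exact absurd hpq hs'
    · rw [heq.1, heq.2, swap_apply_self, swap_apply_self] at hs
      exact absurd hpq' hs
    · rw [heq.1, heq.2]

lemma lt_of_invNum_lt_invNum_mul_swap {u : Perm ℕ} {a b : ℕ} (hab : a < b)
    (hfin : (inversionSet u).Finite) (h : invNum u < invNum (u * swap a b)) : u a < u b := by
  by_contra! hba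
  have hlt : u b < u a := hba.lt_of_ne (u.injective.ne hab.ne')
  have hback : u * swap a b * swap a b = u := by simp [mul_assoc]
  have := invNum_le_invNum_mul_swap hab (by simpa using hlt) (hback ▸ hfin)
  rw [hback] at this
  omega

def rankNum (u : Perm ℕ) (p q : ℕ) : ℕ := ((Finset.range p).filter (fun k => u k < q)).card

lemma rankNum_mul_swap_le {u : Perm ℕ} {a b : ℕ} (hab : a < b) (hu : u a < u b) (p q : ℕ) :
    rankNum (u * swap a b) p q ≤ rankNum u p q := by
  rcases le_or_gt p b with hpb | hbp
  · refine Finset.card_le_card fun k hk => ?_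
    rw [Finset.mem_filter, Finset.mem_range, Perm.mul_apply] at hk
    refine Finset.mem_filter.2 ⟨Finset.mem_range.2 hk.1, ?_⟩
    rcases eq_or_ne k a with rfl | hka
    · rw [swap_apply_left] at hk
      omega
    · rw [swap_apply_of_ne_of_ne hka (by omega)] at hk
      exact hk.2
  · -- `T_{a,b}` permutes `[0, p)`, so the two counts agree
    refine Finset.card_le_card_of_injOn (swap a b) (fun k hk => ?_) (swap a b).injective.injOn
    rw [Finset.coe_filter, Set.mem_ofPred_eq, Finset.mem_range] at hk
    refine Finset.mem_filter.2 ⟨Finset.mem_range.2 ?_, by simpa using hk.2⟩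
    rw [swap_apply_def]
    split_ifs <;> omega

lemma rankNum_le_of_bruhatLE {u v : Perm ℕ} (h : BruhatLE u v) (hu : (inversionSet u).Finite)
    (p q : ℕ) : rankNum v p q ≤ rankNum u p q := by
  suffices (inversionSet v).Finite ∧ ∀ p q, rankNum v p q ≤ rankNum u p q from this.2 p q
  induction h with
  | refl => exact ⟨hu, fun _ _ => le_rfl⟩
  | tail _ hstep ih =>
    obtain ⟨⟨a, b, hab, rfl⟩, hlt⟩ := hstep
    have hasc := lt_of_invNum_lt_invNum_mul_swap hab ih.1 hlt
    exact ⟨Set.finite_of_ncard_pos ((Nat.zero_le _).trans_lt hlt),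
      fun p q => (rankNum_mul_swap_le hab hasc p q).trans (ih.2 p q)⟩

lemma rankNum_swap_lt_min {x y p q : ℕ} (hxp : x < p) (hpy : p ≤ y) (hxq : x < q) (hqy : q ≤ y) :
    rankNum (swap x y) p q < min p q := by
  have hsub : (Finset.range p).filter (fun k => swap x y k < q) ⊆
      (Finset.range (min p q)).erase x := by
    intro k hk
    simp only [Finset.mem_filter, Finset.mem_range, Finset.mem_erase] at hk ⊢
    rcases eq_or_ne k x with rfl | hkx
    · rw [swap_apply_left] at hk
      omega
    · rw [swap_apply_of_ne_of_ne hkx (by omega)] at hk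
      omega
  calc rankNum (swap x y) p q ≤ ((Finset.range (min p q)).erase x).card := Finset.card_le_card hsub
    _ < min p q := by
      rw [Finset.card_erase_of_mem (by simp; omega), Finset.card_range]
      omega

lemma card_le_rankNum {u : Perm ℕ} {s : Finset ℕ} {p q : ℕ} (hp : ∀ k ∈ s, k < p)
    (hq : ∀ k ∈ s, u k < q) : s.card ≤ rankNum u p q :=
  Finset.card_le_card fun k hk => by simpa using ⟨hp k hk, hq k hk⟩

theorem stmt17_general (w : Perm ℕ)
    (i j : ℕ) (hij : i < j)
    (hfix : (fun m => w m) '' {m | m < i} = {m | m < i})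
    (hwj : w j = i) :
    ∀ x y : ℕ, x < y → BruhatLE (Equiv.swap x y) w →
      Equiv.swap x y i ≠ i → x = i ∧ y ≤ j := by
  intro x y hxy hle hmoves
  have hsmall : ∀ m < i, w m < i := fun m hm => hfix.subset ⟨m, hm, rfl⟩
  have hrank := rankNum_le_of_bruhatLE hle
    (inversionSet_finite_of_forall_le_eq (N := y + 1) fun k hk => swap_apply_of_ne_of_ne
      (by omega) (by omega))
  obtain rfl | rfl : x = i ∨ y = i := by
    by_contra! hne
    exact hmoves (swap_apply_of_ne_of_ne hne.1.symm hne.2.symm)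
  · refine ⟨rfl, not_lt.1 fun hjy => ?_⟩
    have hw : (insert j (Finset.range x)).card ≤ rankNum w y (x + 1) :=
      card_le_rankNum (fun k hk => by simp at hk; omega) <| by
        simp only [Finset.forall_mem_insert, Finset.mem_range]
        exact ⟨by omega, fun k hk => (hsmall k hk).trans x.lt_add_one⟩
    rw [Finset.card_insert_of_notMem (by simp; omega), Finset.card_range] at hw
    have := rankNum_swap_lt_min hxy le_rfl x.lt_add_one (by omega)
    have := hrank y (x + 1)
    omega
  · have hw : (Finset.range (x + 1)).card ≤ rankNum w (x + 1) y :=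
      card_le_rankNum (fun k => Finset.mem_range.1)
        fun k hk => hsmall k ((Finset.mem_range.1 hk).trans_le hxy)
    rw [Finset.card_range] at hw
    have := rankNum_swap_lt_min x.lt_add_one hxy hxy le_rfl
    have := hrank (x + 1) y
    omega

/-- With wedge data (i,j), every transposition below w in Bruhat order that
does not fix i has the form T_{i,r} with i < r ≤ j. -/
theorem stmt17 (n : ℕ) (w : Perm ℕ) (hw : ∀ k, n ≤ k → w k = k)
    (h3412 : Avoids3412 w) (h4231 : Avoids4231 w)
    (i j : ℕ) (hij : i < j) (hjn : j < n)
    (hfix : (fun m => w m) '' {m | m < i} = {m | m < i})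
    (hwi : j ≤ w i) (hwj : w j = i) :
    ∀ x y : ℕ, x < y → BruhatLE (Equiv.swap x y) w →
      Equiv.swap x y i ≠ i → x = i ∧ y ≤ j :=
  stmt17_general w i j hij hfix hwj
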